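/- Let pen(k, n) = ((k(k-1)(2k-1))/12 + ((k-1)(k+1+ε))/2) log n + n log((k-1)!) with ε > 0. Then b_n := -((k₀(k₀+2)-1)/2) - pen(k₀, n)/log n + pen(⌊log n⌋, n)/log n - n log(k₀)/log n tends to +∞ as n → ∞, for any fixed k₀ ≥ 1. -/

import Mathlib

open Filter

/-- The DNML penalty
`pen(k,n) = (k(k-1)(2k-1)/12 + (k-1)(k+1+ε)/2) log n + n log((k-1)!)`. -/
noncomputable def penDNML (ε : ℝ) (k n : ℕ) : ℝ :=
  ((k : ℝ) * ((k : ℝ) - 1) * (2 * (k : ℝ) - 1) / 12 +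
    ((k : ℝ) - 1) * ((k : ℝ) + 1 + ε) / 2) * Real.log n +
  (n : ℝ) * Real.log (Nat.factorial (k - 1))

/-!
Write `m = ⌊log n⌋`. Divided by `log n`, `pen(k, n)` becomes its coefficient of `log n`
plus `n log((k-1)!) / log n`; that coefficient is a constant for `k = k₀` and nonnegative for
`k = m ≥ 1`. Since `log((k₀-1)!) + log k₀ = log k₀!` and `(m-1)! → ∞`, eventually
`log((m-1)!) - log((k₀-1)!) - log k₀ ≥ 1`, so `b_n` is at least a constant plus `n / log n`.
-/

namespace Real

lemma tendsto_div_log_atTop : Tendsto (fun x : ℝ => x / log x) atTop atTop :=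
  ((tendsto_exp_div_pow_atTop 1).comp tendsto_log_atTop).congr' <| by
    filter_upwards [eventually_gt_atTop 0] with x hx using by simp [exp_log hx]

lemma log_factorial_pred_add_log (k : ℕ) :
    log ((k - 1).factorial : ℝ) + log k = log k.factorial := by
  rcases k with _ | k
  · simp -- `log 0 = 0` and `(0 - 1)! = 0! = 1`
  · rw [← log_mul (by positivity) (by positivity), Nat.factorial_succ, Nat.add_sub_cancel]
    push_cast
    ring_nf

end Real

noncomputable def penDNMLCoeff (ε : ℝ) (k : ℕ) : ℝ :=
  (k : ℝ) * ((k : ℝ) - 1) * (2 * (k : ℝ) - 1) / 12 + ((k : ℝ) - 1) * ((k : ℝ) + 1 + ε) / 2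

lemma penDNMLCoeff_nonneg {ε : ℝ} (hε : 0 ≤ ε) {k : ℕ} (hk : 1 ≤ k) : 0 ≤ penDNMLCoeff ε k := by
  have hk' : (1 : ℝ) ≤ k := by exact_mod_cast hk
  unfold penDNMLCoeff
  have h₁ : 0 ≤ (k : ℝ) * ((k : ℝ) - 1) * (2 * (k : ℝ) - 1) := by
    apply mul_nonneg (mul_nonneg _ _) <;> linarith
  have h₂ : 0 ≤ ((k : ℝ) - 1) * ((k : ℝ) + 1 + ε) := mul_nonneg (by linarith) (by linarith)
  exact add_nonneg (div_nonneg h₁ (by norm_num)) (div_nonneg h₂ (by norm_num))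

lemma penDNML_div_log (ε : ℝ) (k : ℕ) {n : ℕ} (hn : Real.log n ≠ 0) :
    penDNML ε k n / Real.log n =
      penDNMLCoeff ε k + n * Real.log (k - 1).factorial / Real.log n := by
  rw [penDNML, add_div, mul_div_cancel_right₀ _ hn, penDNMLCoeff]

lemma tendsto_log_factorial_pred_floor_log :
    Tendsto (fun n : ℕ => Real.log (⌊Real.log n⌋₊ - 1).factorial) atTop atTop :=
  Real.tendsto_log_atTop.comp <| tendsto_natCast_atTop_atTop.comp <|
    factorial_tendsto_atTop.comp <| (tendsto_sub_atTop_nat 1).comp <|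
      tendsto_nat_floor_atTop.comp <| Real.tendsto_log_atTop.comp tendsto_natCast_atTop_atTop

theorem penDNML_bn_tendsto_atTop_general (ε : ℝ) (hε : 0 < ε) (k₀ : ℕ) :
    Tendsto (fun n : ℕ =>
      -(((k₀ : ℝ) * (k₀ + 2) - 1)/2) - penDNML ε k₀ n / Real.log n +
        penDNML ε (Nat.floor (Real.log n)) n / Real.log n -
        (n : ℝ) * Real.log k₀ / Real.log n) atTop atTop := by
  refine tendsto_atTop_mono' _ ?_ <|
    tendsto_atTop_add_const_left _ (-(((k₀ : ℝ) * (k₀ + 2) - 1) / 2 + penDNMLCoeff ε k₀)) <|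
    Real.tendsto_div_log_atTop.comp tendsto_natCast_atTop_atTop
  filter_upwards [(Real.tendsto_log_atTop.comp tendsto_natCast_atTop_atTop).eventually_ge_atTop 1,
    tendsto_log_factorial_pred_floor_log.eventually_ge_atTop (Real.log k₀.factorial + 1)]
    with n (hlog : 1 ≤ Real.log n) hfac
  set m := ⌊Real.log n⌋₊
  rw [← Real.log_factorial_pred_add_log] at hfac
  have hm : 1 ≤ m := Nat.le_floor (by exact_mod_cast hlog)
  have hgain : (n : ℝ) / Real.log n ≤ n * Real.log (m - 1).factorial / Real.log n -
      n * Real.log (k₀ - 1).factorial / Real.log n - n * Real.log k₀ / Real.log n := by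
    rw [← sub_div, ← sub_div]
    gcongr
    nlinarith [Nat.cast_nonneg (α := ℝ) n]
  rw [penDNML_div_log _ _ (by positivity), penDNML_div_log _ _ (by positivity)]
  have hcoeff := penDNMLCoeff_nonneg hε.le hm
  simp only [Function.comp_apply]
  linarith

/-- The sequence
`b_n = -((k₀(k₀+2)-1)/2) - pen(k₀,n)/log n + pen(⌊log n⌋,n)/log n - n log k₀ / log n`
tends to `+∞`. -/
theorem penDNML_bn_tendsto_atTop (ε : ℝ) (hε : 0 < ε) (k₀ : ℕ) (hk₀ : 1 ≤ k₀) :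
    Tendsto (fun n : ℕ =>
      -(((k₀ : ℝ) * (k₀ + 2) - 1)/2) - penDNML ε k₀ n / Real.log n +
        penDNML ε (Nat.floor (Real.log n)) n / Real.log n -
        (n : ℝ) * Real.log k₀ / Real.log n) atTop atTop :=
  penDNML_bn_tendsto_atTop_general ε hε k₀
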